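/- arXiv:2510.10146 — 5 statements merged into one kernel-verified Lean document; each statement's English description precedes it below -/
import Mathlib

section
/- Let f : ℝ → ℝ be convex and continuously differentiable, and suppose there is a constant β > 0 such that |f(t)| ≤ β(1 + t²) for all t ∈ ℝ. Then |f'(t)| ≤ 7β(1 + |t|) for all t ∈ ℝ. -/
/-!
Convexity traps the tangent line at `t` between the two secants of width `h`, so
`|f' t| * h` is at most the larger increment `f (t ± h) - f t`. With `h = 1 + |t|` both
points `t ± h` have absolute value at most `1 + 2|t|`, so the quadratic growth bound makes each
increment at most `β (1 + (1 + 2|t|)²) + β (1 + t²) ≤ 7 β (1 + |t|)²`; dividing by `h`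
gives the claim.
-/

open Set

theorem ConvexOn.abs_deriv_mul_le_max {f : ℝ → ℝ} {t h : ℝ} (hf : ConvexOn ℝ univ f)
    (hd : DifferentiableAt ℝ f t) (hh : 0 < h) :
    |deriv f t| * h ≤ max (f (t + h) - f t) (f (t - h) - f t) := by
  have right : deriv f t * h ≤ f (t + h) - f t := by
    have := hf.deriv_le_slope (mem_univ t) (mem_univ (t + h)) (by linarith) hd
    rwa [slope_def_field, add_sub_cancel_left, le_div_iff₀ hh] at this
  have left : f t - f (t - h) ≤ deriv f t * h := by
    have := hf.slope_le_deriv (mem_univ (t - h)) (mem_univ t) (by linarith) hd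
    rwa [slope_def_field, sub_sub_cancel, div_le_iff₀ hh] at this
  calc |deriv f t| * h = |deriv f t * h| := by rw [abs_mul, abs_of_pos hh]
    _ ≤ max (f (t + h) - f t) (f (t - h) - f t) :=
      abs_le'.mpr ⟨right.trans (le_max_left _ _), (neg_le.mpr (by linarith)).trans (le_max_right _ _)⟩

theorem sub_le_of_abs_le_mul_one_add_sq {f : ℝ → ℝ} {β : ℝ}
    (hgrowth : ∀ x, |f x| ≤ β * (1 + x ^ 2)) {t u : ℝ} (hu : |u| ≤ 1 + 2 * |t|) :
    f u - f t ≤ 7 * β * (1 + |t|) ^ 2 := by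
  have hβ : 0 ≤ β := by simpa using (abs_nonneg (f 0)).trans (hgrowth 0)
  have hu_sq : u ^ 2 ≤ (1 + 2 * |t|) ^ 2 := sq_le_sq' (abs_le.mp hu).1 (abs_le.mp hu).2
  calc f u - f t ≤ β * (1 + u ^ 2) + β * (1 + |t| ^ 2) := by
        rw [sq_abs]
        linarith [(abs_le.mp (hgrowth u)).2, (abs_le.mp (hgrowth t)).1]
    _ ≤ β * (1 + (1 + 2 * |t|) ^ 2) + β * (1 + |t| ^ 2) := by gcongr
    _ ≤ 7 * β * (1 + |t|) ^ 2 := by nlinarith [mul_nonneg hβ (abs_nonneg t)]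

theorem stmt_0_general (f : ℝ → ℝ) (β : ℝ)
    (hconv : ConvexOn ℝ Set.univ f) (hC1 : ContDiff ℝ 1 f)
    (hgrowth : ∀ t : ℝ, |f t| ≤ β * (1 + t ^ 2)) :
    ∀ t : ℝ, |deriv f t| ≤ 7 * β * (1 + |t|) := by
  intro t
  have hh : 0 < 1 + |t| := by positivity
  have tangent := hconv.abs_deriv_mul_le_max (hC1.differentiable one_ne_zero t) hh
  have increments : max (f (t + (1 + |t|)) - f t) (f (t - (1 + |t|)) - f t) ≤
      7 * β * (1 + |t|) * (1 + |t|) := by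
    rw [mul_assoc, ← sq]
    refine max_le (sub_le_of_abs_le_mul_one_add_sq hgrowth ?_)
      (sub_le_of_abs_le_mul_one_add_sq hgrowth ?_)
    · linarith [abs_add_le t (1 + |t|), abs_of_pos hh]
    · linarith [abs_sub t (1 + |t|), abs_of_pos hh]
  exact le_of_mul_le_mul_right (tangent.trans increments) hh

/-- Let `f : ℝ → ℝ` be convex and continuously differentiable, and suppose there
is a constant `β > 0` such that `|f t| ≤ β (1 + t²)` for all `t`. Then
`|f' t| ≤ 7 β (1 + |t|)` for all `t`. -/
theorem stmt_0 (f : ℝ → ℝ) (β : ℝ) (hβ : 0 < β)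
    (hconv : ConvexOn ℝ Set.univ f) (hC1 : ContDiff ℝ 1 f)
    (hgrowth : ∀ t : ℝ, |f t| ≤ β * (1 + t ^ 2)) :
    ∀ t : ℝ, |deriv f t| ≤ 7 * β * (1 + |t|) :=
  stmt_0_general f β hconv hC1 hgrowth
end

section
/- Let (a_n)_{n≥1} satisfy 0 < α ≤ a_n ≤ M, and for each n let f_n : ℝ → ℝ be C¹ and convex with |f_n(t)| ≤ β_n(1+t²) for all t, where (β_n) ∈ s. Define F(x) = (1/2) Σ_{n=1}^∞ a_n x_n² + Σ_{n=1}^∞ f_n(x_n) on s. Then for every x = (x_n) ∈ s and every h = (h_n) ∈ s, the series Σ_{n=1}^∞ (a_n x_n + f_n'(x_n)) h_n converges absolutely, and the directional derivative of F at x in the direction h exists and equals it: lim_{t→0} (F(x + t h) − F(x))/t = Σ_{n=1}^∞ (a_n x_n + f_n'(x_n)) h_n. -/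
/-!
Write `F(x) = Σ φₙ(xₙ)` with `φₙ(y) = aₙ y²/2 + fₙ(y)`, a convex function since `aₙ ≥ 0`.
By convexity the slope `(φₙ(xₙ + t hₙ) - φₙ(xₙ)) / t` is monotone in `t`, so for `0 < |t| ≤ 1`
it lies between its values at `t = -1` and `t = 1`, and so does its limit `φₙ'(xₙ) hₙ`. Both are
therefore bounded by `sup_{|u| ≤ 1} |φₙ(xₙ + u hₙ) - φₙ(xₙ)| ≤ M R |hₙ| + 2 βₙ (1 + R²)`, where `R`
bounds `|xₙ| + |hₙ|`. This bound is summable, which gives the absolute convergence, and dominated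
convergence for series lets the limit `t → 0` pass inside the sum.
-/

open Filter Topology

/-- The space `s` of rapidly decreasing sequences (indexed so that `x n` represents the
`(n+1)`-st term of the paper's sequence `(x_n)_{n ≥ 1}`). -/
def InS (x : ℕ → ℝ) : Prop :=
  ∀ k : ℕ, ∃ C : ℝ, ∀ n : ℕ, |x n| * ((n : ℝ) + 1) ^ k ≤ C

/-- The `𝓕ₛ`-functional `F(x) = (1/2) Σ a_n x_n² + Σ f_n(x_n)`. -/
noncomputable def Ffun (a : ℕ → ℝ) (f : ℕ → ℝ → ℝ) (x : ℕ → ℝ) : ℝ :=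
  (1 / 2) * ∑' n : ℕ, a n * x n ^ 2 + ∑' n : ℕ, f n (x n)

open Set

lemma InS.exists_abs_le {x : ℕ → ℝ} (hx : InS x) : ∃ B, ∀ n, |x n| ≤ B := by
  obtain ⟨C, hC⟩ := hx 0
  exact ⟨C, fun n => by simpa using hC n⟩

lemma InS.summable_abs {x : ℕ → ℝ} (hx : InS x) : Summable fun n => |x n| := by
  obtain ⟨C, hC⟩ := hx 2
  have hs : Summable fun n : ℕ => C / ((n : ℝ) + 1) ^ 2 := by
    have := (summable_nat_add_iff 1).mpr <| Real.summable_one_div_nat_pow.mpr one_lt_two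
    exact (this.mul_left C).congr fun n => by push_cast; ring
  refine hs.of_nonneg_of_le (fun n => abs_nonneg _) fun n => ?_
  rw [le_div_iff₀ (by positivity)]
  exact hC n

lemma InS.add_mul {x h : ℕ → ℝ} (hx : InS x) (hh : InS h) (t : ℝ) :
    InS fun n => x n + t * h n := by
  intro k
  obtain ⟨Cx, hCx⟩ := hx k
  obtain ⟨Ch, hCh⟩ := hh k
  refine ⟨Cx + |t| * Ch, fun n => ?_⟩
  calc |x n + t * h n| * ((n : ℝ) + 1) ^ k
      ≤ |x n| * ((n : ℝ) + 1) ^ k + |t| * (|h n| * ((n : ℝ) + 1) ^ k) := by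
        rw [← mul_assoc, ← abs_mul, ← _root_.add_mul]
        gcongr
        exact abs_add_le _ _
    _ ≤ Cx + |t| * Ch := by gcongr <;> simp [hCx, hCh]

lemma abs_le_mul_one_add_sq_of_abs_le {g : ℝ → ℝ} {b : ℝ} (hg : ∀ t, |g t| ≤ b * (1 + t ^ 2))
    {y R : ℝ} (hy : |y| ≤ R) : |g y| ≤ b * (1 + R ^ 2) := by
  have hb : 0 ≤ b := (abs_nonneg _).trans (by simpa using hg 0)
  refine (hg y).trans (mul_le_mul_of_nonneg_left ?_ hb)
  have := sq_le_sq' (neg_le_of_abs_le hy) (le_of_abs_le hy)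
  linarith

lemma InS.summable_mul_sq {z : ℕ → ℝ} (hz : InS z) {a : ℕ → ℝ} {M : ℝ} (ha : ∀ n, |a n| ≤ M) :
    Summable fun n => a n * z n ^ 2 := by
  obtain ⟨B, hB⟩ := hz.exists_abs_le
  refine Summable.of_norm_bounded (hz.summable_abs.mul_left (M * B)) fun n => ?_
  rw [Real.norm_eq_abs, abs_mul, abs_pow, sq, ← mul_assoc]
  have hM : 0 ≤ M := (abs_nonneg _).trans (ha n)
  gcongr
  exacts [ha n, hB n]

lemma summable_apply_of_abs_le_mul_one_add_sq {f : ℕ → ℝ → ℝ} {β : ℕ → ℝ} (hβ : Summable β)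
    (hf : ∀ n t, |f n t| ≤ β n * (1 + t ^ 2)) {z : ℕ → ℝ} {B : ℝ} (hz : ∀ n, |z n| ≤ B) :
    Summable fun n => f n (z n) := by
  refine Summable.of_norm_bounded (hβ.abs.mul_right (1 + B ^ 2)) fun n => ?_
  exact (abs_le_mul_one_add_sq_of_abs_le (hf n) (hz n)).trans (by gcongr; exact le_abs_self _)

lemma InS.hasSum_Ffun {z : ℕ → ℝ} (hz : InS z) {a β : ℕ → ℝ} {M : ℝ} {f : ℕ → ℝ → ℝ}
    (ha : ∀ n, |a n| ≤ M) (hf : ∀ n t, |f n t| ≤ β n * (1 + t ^ 2)) (hβ : Summable β) :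
    HasSum (fun n => a n * z n ^ 2 / 2 + f n (z n)) (Ffun a f z) := by
  have hsum := ((hz.summable_mul_sq ha).hasSum.mul_left (1 / 2)).add
    (summable_apply_of_abs_le_mul_one_add_sq hβ hf hz.exists_abs_le.choose_spec).hasSum
  rw [show (fun n => a n * z n ^ 2 / 2 + f n (z n)) = fun n => 1 / 2 * (a n * z n ^ 2) + f n (z n)
    from funext fun n => by ring]
  exact hsum

lemma Ffun_sub_div_eq_tsum_slope {a β : ℕ → ℝ} {M : ℝ} {f : ℕ → ℝ → ℝ} (ha : ∀ n, |a n| ≤ M)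
    (hf : ∀ n t, |f n t| ≤ β n * (1 + t ^ 2)) (hβ : Summable β) {x h : ℕ → ℝ} (hx : InS x)
    (hh : InS h) (t : ℝ) :
    (Ffun a f (fun n => x n + t * h n) - Ffun a f x) / t =
      ∑' n, slope (fun u => a n * (x n + u * h n) ^ 2 / 2 + f n (x n + u * h n)) 0 t := by
  refine (((hx.add_mul hh t).hasSum_Ffun ha hf hβ).sub (hx.hasSum_Ffun ha hf hβ)
    |>.div_const t).tsum_eq.symm.trans (tsum_congr fun n => ?_)
  simp [slope_def_field]

lemma convexOn_mul_sq_div_two_add {a : ℝ} (ha : 0 ≤ a) {f : ℝ → ℝ} (hf : ConvexOn ℝ univ f) :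
    ConvexOn ℝ univ fun y => a * y ^ 2 / 2 + f y := by
  have e : (fun y => a * y ^ 2 / 2 + f y) = (fun y : ℝ => (a / 2) • y ^ 2) + f := by
    ext y
    simp only [Pi.add_apply, smul_eq_mul]
    ring
  rw [e]
  exact ((even_two.convexOn_pow).smul (div_nonneg ha zero_le_two)).add hf

lemma hasDerivAt_mul_sq_div_two_add {f : ℝ → ℝ} {y : ℝ} (a : ℝ) (hf : DifferentiableAt ℝ f y) :
    HasDerivAt (fun y => a * y ^ 2 / 2 + f y) (a * y + deriv f y) y := by
  refine (((hasDerivAt_pow 2 y).const_mul a).div_const 2 |>.add hf.hasDerivAt).congr_deriv ?_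
  push_cast
  ring

lemma ConvexOn.comp_add_mul {φ : ℝ → ℝ} (hφ : ConvexOn ℝ univ φ) (x h : ℝ) :
    ConvexOn ℝ univ fun u => φ (x + u * h) := by
  have e : (fun u => φ (x + u * h)) = φ ∘ AffineMap.lineMap x (x + h) := by
    ext u
    simp [AffineMap.lineMap_apply, add_comm]
  have := hφ.comp_affineMap (AffineMap.lineMap x (x + h))
  rwa [preimage_univ, ← e] at this

lemma HasDerivAt.tendsto_slope_comp_add_mul {φ : ℝ → ℝ} {φ' x : ℝ} (hφ : HasDerivAt φ φ' x)
    (h : ℝ) : Tendsto (slope (fun u => φ (x + u * h)) 0) (𝓝[≠] 0) (𝓝 (φ' * h)) := by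
  have hline : HasDerivAt (fun u : ℝ => x + u * h) h 0 := by
    simpa using ((hasDerivAt_id (0 : ℝ)).mul_const h).const_add x
  exact hasDerivAt_iff_tendsto_slope.mp (hφ.comp_of_eq 0 hline (by simp))

lemma eventually_ne_zero_and_abs_le_one : ∀ᶠ t in 𝓝[≠] (0 : ℝ), t ≠ 0 ∧ |t| ≤ 1 := by
  filter_upwards [eventually_mem_nhdsWithin,
    nhdsWithin_le_nhds (Metric.closedBall_mem_nhds (0 : ℝ) one_pos)] with t ht₀ ht
  exact ⟨ht₀, by simpa [Real.dist_eq] using ht⟩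

lemma ConvexOn.abs_slope_comp_add_mul_le {φ : ℝ → ℝ} (hφ : ConvexOn ℝ univ φ) {x h B : ℝ}
    (hB : ∀ u, |u| ≤ 1 → |φ (x + u * h) - φ x| ≤ B) {t : ℝ} (ht₀ : t ≠ 0) (ht : |t| ≤ 1) :
    |slope (fun u => φ (x + u * h)) 0 t| ≤ B := by
  have hmono := (hφ.comp_add_mul x h).slope_mono (mem_univ 0)
  have hle : slope (fun u => φ (x + u * h)) 0 t ≤ slope (fun u => φ (x + u * h)) 0 1 :=
    hmono ⟨trivial, ht₀⟩ ⟨trivial, one_ne_zero⟩ (le_of_abs_le ht)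
  have hge : slope (fun u => φ (x + u * h)) 0 (-1) ≤ slope (fun u => φ (x + u * h)) 0 t :=
    hmono ⟨trivial, by norm_num⟩ ⟨trivial, ht₀⟩ (neg_le_of_abs_le ht)
  have h1 := abs_le.mp (hB 1 (by norm_num))
  have h2 := abs_le.mp (hB (-1) (by norm_num))
  rw [abs_le]
  simp only [slope_def_field, zero_mul, add_zero, sub_zero, div_one, div_neg] at hle hge ⊢
  constructor <;> linarith

lemma ConvexOn.abs_mul_le_of_hasDerivAt {φ : ℝ → ℝ} (hφ : ConvexOn ℝ univ φ) {φ' x h B : ℝ}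
    (hB : ∀ u, |u| ≤ 1 → |φ (x + u * h) - φ x| ≤ B) (hd : HasDerivAt φ φ' x) :
    |φ' * h| ≤ B :=
  le_of_tendsto (hd.tendsto_slope_comp_add_mul h).abs <|
    eventually_ne_zero_and_abs_le_one.mono fun _ ht => hφ.abs_slope_comp_add_mul_le hB ht.1 ht.2

lemma abs_mul_sq_div_two_add_sub_le {a M b x h u R : ℝ} {f : ℝ → ℝ} (ha : |a| ≤ M)
    (hf : ∀ t, |f t| ≤ b * (1 + t ^ 2)) (hR : |x| + |h| ≤ R) (hu : |u| ≤ 1) :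
    |a * (x + u * h) ^ 2 / 2 + f (x + u * h) - (a * x ^ 2 / 2 + f x)| ≤
      M * R * |h| + 2 * (b * (1 + R ^ 2)) := by
  have huh : |u * h| ≤ |h| := by
    rw [abs_mul]; exact mul_le_of_le_one_left (abs_nonneg _) hu
  have hxuh : |x + u * h| ≤ R := (abs_add_le _ _).trans (by linarith)
  have hquad : |a * (x + u * h) ^ 2 / 2 - a * x ^ 2 / 2| ≤ M * R * |h| := by
    rw [show a * (x + u * h) ^ 2 / 2 - a * x ^ 2 / 2 = a * (u * h) * ((x + u * h + x) / 2) by ring,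
      abs_mul, abs_mul]
    have : |(x + u * h + x) / 2| ≤ R := by
      rw [abs_div, abs_two, div_le_iff₀ two_pos]
      linarith [abs_add_le (x + u * h) x, abs_nonneg h]
    have hM : 0 ≤ M := (abs_nonneg a).trans ha
    calc |a| * |u * h| * |(x + u * h + x) / 2| ≤ M * |h| * R := by gcongr
      _ = M * R * |h| := by ring
  have h1 := abs_le_mul_one_add_sq_of_abs_le hf hxuh
  have h2 := abs_le_mul_one_add_sq_of_abs_le hf (show |x| ≤ R by linarith [abs_nonneg h])
  calc _ = |(a * (x + u * h) ^ 2 / 2 - a * x ^ 2 / 2) + f (x + u * h) - f x| := by ring_nf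
    _ ≤ |a * (x + u * h) ^ 2 / 2 - a * x ^ 2 / 2| + |f (x + u * h)| + |f x| :=
      (abs_sub _ _).trans (by gcongr; exact abs_add_le _ _)
    _ ≤ _ := by linarith

/-- for every `x, h ∈ s`, the series `Σ (a_n x_n + f_n'(x_n)) h_n` converges
absolutely, and the directional derivative of `F` at `x` in direction `h` exists and equals
it: `lim_{t → 0} (F(x + t h) - F(x)) / t = Σ (a_n x_n + f_n'(x_n)) h_n`. -/
theorem stmt_4 (a β : ℕ → ℝ) (α M : ℝ) (f : ℕ → ℝ → ℝ)
    (hα : 0 < α) (ha : ∀ n, α ≤ a n ∧ a n ≤ M)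
    (hC1 : ∀ n, ContDiff ℝ 1 (f n)) (hconv : ∀ n, ConvexOn ℝ Set.univ (f n))
    (hgrowth : ∀ n t, |f n t| ≤ β n * (1 + t ^ 2)) (hβ : InS β) :
    ∀ x h : ℕ → ℝ, InS x → InS h →
      Summable (fun n => |(a n * x n + deriv (f n) (x n)) * h n|) ∧
      Tendsto (fun t : ℝ => (Ffun a f (fun n => x n + t * h n) - Ffun a f x) / t)
        (𝓝[≠] (0 : ℝ)) (𝓝 (∑' n : ℕ, (a n * x n + deriv (f n) (x n)) * h n)) := by
  intro x h hx hh
  have ha_nonneg n : 0 ≤ a n := hα.le.trans (ha n).1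
  have hM n : |a n| ≤ M := abs_le.mpr ⟨by linarith [ha_nonneg n, (ha n).2], (ha n).2⟩
  obtain ⟨Bx, hBx⟩ := hx.exists_abs_le
  obtain ⟨Bh, hBh⟩ := hh.exists_abs_le
  have hβ' : Summable β := hβ.summable_abs.of_abs
  set R := Bx + Bh
  set φ : ℕ → ℝ → ℝ := fun n y => a n * y ^ 2 / 2 + f n y
  set D : ℕ → ℝ := fun n => M * R * |h n| + 2 * (β n * (1 + R ^ 2))
  have hD : Summable D :=
    (hh.summable_abs.mul_left _).add ((hβ'.mul_right _).mul_left 2)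
  have hφ n : ConvexOn ℝ univ (φ n) := convexOn_mul_sq_div_two_add (ha_nonneg n) (hconv n)
  have hφ' n : HasDerivAt (φ n) (a n * x n + deriv (f n) (x n)) (x n) :=
    hasDerivAt_mul_sq_div_two_add (a n) ((hC1 n).differentiable one_ne_zero (x n))
  have hφD n : ∀ u, |u| ≤ 1 → |φ n (x n + u * h n) - φ n (x n)| ≤ D n := fun u hu =>
    abs_mul_sq_div_two_add_sub_le (hM n) (hgrowth n) (add_le_add (hBx n) (hBh n)) hu
  refine ⟨hD.of_nonneg_of_le (fun n => abs_nonneg _)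
    fun n => (hφ n).abs_mul_le_of_hasDerivAt (hφD n) (hφ' n), ?_⟩
  simp_rw [Ffun_sub_div_eq_tsum_slope hM hgrowth hβ' hx hh]
  exact tendsto_tsum_of_dominated_convergence hD
    (fun n => (hφ' n).tendsto_slope_comp_add_mul (h n))
    (eventually_ne_zero_and_abs_le_one.mono fun t ht n =>
      (hφ n).abs_slope_comp_add_mul_le (hφD n) ht.1 ht.2)
end

section
/- Let (a_n)_{n≥1} satisfy 0 < α ≤ a_n ≤ M, and for each n let f_n : ℝ → ℝ be C¹ with |f_n'(t)| ≤ β̂_n(1 + |t|) for all t ∈ ℝ, where (β̂_n) ∈ s. Fix k ∈ ℕ and R > 0. Then there exists a constant C'_k > 0, depending only on k, (β̂_n) and R, such that for every x = (x_n) ∈ s with Σ_{n=1}^∞ x_n² ≤ R, setting g_n := a_n x_n + f_n'(x_n), one has (α/2) Σ_{n=1}^∞ x_n² n^{2k} ≤ (1/(2α)) Σ_{n=1}^∞ g_n² n^{2k} + C'_k. -/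
namespace InS

variable {x y : ℕ → ℝ}

theorem add (hx : InS x) (hy : InS y) : InS fun n => x n + y n := fun k => by
  obtain ⟨C, hC⟩ := hx k
  obtain ⟨D, hD⟩ := hy k
  refine ⟨C + D, fun n => ?_⟩
  calc |x n + y n| * ((n : ℝ) + 1) ^ k
      ≤ (|x n| + |y n|) * ((n : ℝ) + 1) ^ k := by gcongr; exact abs_add_le _ _
    _ ≤ C + D := by linarith [hC n, hD n]

theorem of_abs_le (hx : InS x) {c : ℝ} (hc : 0 ≤ c) (h : ∀ n, |y n| ≤ c * |x n|) :
    InS y := fun k => by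
  obtain ⟨C, hC⟩ := hx k
  refine ⟨c * C, fun n => ?_⟩
  calc |y n| * ((n : ℝ) + 1) ^ k ≤ c * |x n| * ((n : ℝ) + 1) ^ k := by gcongr; exact h n
    _ = c * (|x n| * ((n : ℝ) + 1) ^ k) := mul_assoc _ _ _
    _ ≤ c * C := by gcongr; exact hC n

theorem exists_abs_le_s8 (hx : InS x) : ∃ C, ∀ n, |x n| ≤ C := by
  simpa using hx 0

theorem sq (hx : InS x) : InS fun n => x n ^ 2 := by
  obtain ⟨C, hC⟩ := hx.exists_abs_le_s8
  refine hx.of_abs_le ((abs_nonneg _).trans (hC 0)) fun n => ?_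
  rw [abs_pow, pow_two]
  exact mul_le_mul_of_nonneg_right (hC n) (abs_nonneg _)

theorem summable_abs_mul_pow (hx : InS x) (m : ℕ) :
    Summable fun n => |x n| * ((n : ℝ) + 1) ^ m := by
  have hinv : Summable fun n : ℕ => 1 / ((n : ℝ) + 1) ^ 2 := by
    simpa using (summable_nat_add_iff 1).mpr (Real.summable_one_div_nat_pow.mpr one_lt_two)
  obtain ⟨C, hC⟩ := hx (m + 2)
  refine (hinv.mul_left C).of_nonneg_of_le (fun n => by positivity) fun n => ?_
  rw [mul_one_div, le_div_iff₀ (by positivity), mul_assoc, ← pow_add]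
  exact hC n

theorem summable_sq_mul_pow (hx : InS x) (m : ℕ) :
    Summable fun n => x n ^ 2 * ((n : ℝ) + 1) ^ m := by
  simpa only [abs_pow, sq_abs] using hx.sq.summable_abs_mul_pow m

theorem abs_le_sqrt_of_tsum_sq_le (hx : InS x) {R : ℝ} (hR : ∑' n, x n ^ 2 ≤ R) (n : ℕ) :
    |x n| ≤ √R := by
  have hx2 : Summable fun n => x n ^ 2 := by simpa using hx.summable_sq_mul_pow 0
  exact Real.abs_le_sqrt <| (hx2.le_tsum n fun _ _ => sq_nonneg _).trans hR

theorem mul_add {a β d : ℕ → ℝ} {M : ℝ} (hx : InS x) (hβ : InS β) (ha : ∀ n, |a n| ≤ M)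
    (hd : ∀ n, |d n| ≤ β n * (1 + |x n|)) : InS fun n => a n * x n + d n := by
  obtain ⟨r, hr⟩ := hx.exists_abs_le_s8
  have hr0 : 0 ≤ r := (abs_nonneg _).trans (hr 0)
  refine (hx.of_abs_le ((abs_nonneg _).trans (ha 0)) fun n => ?_).add
    (hβ.of_abs_le (by positivity : 0 ≤ 1 + r) fun n => ?_)
  · rw [abs_mul]
    exact mul_le_mul_of_nonneg_right (ha n) (abs_nonneg _)
  · calc |d n| ≤ β n * (1 + |x n|) := hd n
      _ ≤ |β n| * (1 + r) := by gcongr; exacts [le_abs_self _, hr n]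
      _ = (1 + r) * |β n| := mul_comm _ _

end InS

theorem half_mul_sq_le {α a : ℝ} (hα : 0 < α) (ha : α ≤ a) (x d : ℝ) :
    α / 2 * x ^ 2 ≤ 1 / (2 * α) * (a * x + d) ^ 2 + |x| * |d| := by
  have hamgm : (a * x + d) * x ≤ 1 / (2 * α) * (a * x + d) ^ 2 + α / 2 * x ^ 2 := by
    have hsq : 0 ≤ 1 / (2 * α) * (a * x + d - α * x) ^ 2 := by positivity
    have e : 1 / (2 * α) * (a * x + d - α * x) ^ 2
        = 1 / (2 * α) * (a * x + d) ^ 2 + α / 2 * x ^ 2 - (a * x + d) * x := by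
      field_simp; ring
    linarith
  have hdx : -(|x| * |d|) ≤ d * x := by
    rw [← abs_mul, mul_comm x]; exact neg_abs_le _
  nlinarith [mul_le_mul_of_nonneg_right ha (sq_nonneg x)]

theorem half_mul_sq_le_of_abs_le {α a β r x d : ℝ} (hα : 0 < α) (ha : α ≤ a) (hx : |x| ≤ r)
    (hd : |d| ≤ β * (1 + |x|)) :
    α / 2 * x ^ 2 ≤ 1 / (2 * α) * (a * x + d) ^ 2 + r * (1 + r) * |β| := by
  have hxd : |x| * |d| ≤ r * (1 + r) * |β| :=
    calc |x| * |d| ≤ r * (|β| * (1 + r)) := by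
          have hr : 0 ≤ r := (abs_nonneg x).trans hx
          gcongr
          exact hd.trans (by gcongr; exact le_abs_self _)
      _ = r * (1 + r) * |β| := by ring
  linarith [half_mul_sq_le hα ha x d]

theorem mul_tsum_le_mul_tsum_add_mul_tsum {ι : Type*} {u v e : ι → ℝ} {p q c : ℝ}
    (hu : Summable u) (hv : Summable v) (he : Summable e)
    (h : ∀ i, p * u i ≤ q * v i + c * e i) :
    p * ∑' i, u i ≤ q * ∑' i, v i + c * ∑' i, e i := by
  rw [← tsum_mul_left, ← tsum_mul_left, ← tsum_mul_left,
    ← (hv.mul_left q).tsum_add (he.mul_left c)]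
  exact (hu.mul_left p).tsum_le_tsum h ((hv.mul_left q).add (he.mul_left c))

theorem stmt_8_general (a βh : ℕ → ℝ) (α M : ℝ) (f : ℕ → ℝ → ℝ)
    (hα : 0 < α) (ha : ∀ n, α ≤ a n ∧ a n ≤ M)
    (hderiv : ∀ n t, |deriv (f n) t| ≤ βh n * (1 + |t|)) (hβh : InS βh)
    (k : ℕ) (R : ℝ) :
    ∃ C' : ℝ, 0 < C' ∧ ∀ x : ℕ → ℝ, InS x → (∑' n : ℕ, x n ^ 2) ≤ R →
      (α / 2) * ∑' n : ℕ, x n ^ 2 * ((n : ℝ) + 1) ^ (2 * k) ≤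
        (1 / (2 * α)) * ∑' n : ℕ, (a n * x n + deriv (f n) (x n)) ^ 2 *
          ((n : ℝ) + 1) ^ (2 * k) + C' := by
  refine ⟨√R * (1 + √R) * ∑' n, |βh n| * ((n : ℝ) + 1) ^ (2 * k) + 1, by positivity,
    fun x hx hxR => ?_⟩
  have hg : InS fun n => a n * x n + deriv (f n) (x n) :=
    hx.mul_add hβh (fun n => abs_le.2 ⟨by linarith [ha n], (ha n).2⟩) fun n => hderiv n (x n)
  have hsum := mul_tsum_le_mul_tsum_add_mul_tsum (p := α / 2) (q := 1 / (2 * α))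
    (c := √R * (1 + √R)) (hx.summable_sq_mul_pow (2 * k))
    (hg.summable_sq_mul_pow (2 * k)) (hβh.summable_abs_mul_pow (2 * k)) fun n => by
      have hw : (0 : ℝ) ≤ ((n : ℝ) + 1) ^ (2 * k) := by positivity
      linarith [mul_le_mul_of_nonneg_right (half_mul_sq_le_of_abs_le hα (ha n).1
        (hx.abs_le_sqrt_of_tsum_sq_le hxR n) (hderiv n (x n))) hw]
  linarith

/-- with `0 < α ≤ a_n ≤ M`, `f_n` C¹ with `|f_n'(t)| ≤ β̂_n (1 + |t|)`,
`(β̂_n) ∈ s`, and fixed `k ∈ ℕ`, `R > 0`, there is a constant `C'_k > 0` such that for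
every `x ∈ s` with `Σ x_n² ≤ R`, putting `g_n := a_n x_n + f_n'(x_n)`,
`(α/2) Σ x_n² n^{2k} ≤ (1/(2α)) Σ g_n² n^{2k} + C'_k`. -/
theorem stmt_8 (a βh : ℕ → ℝ) (α M : ℝ) (f : ℕ → ℝ → ℝ)
    (hα : 0 < α) (ha : ∀ n, α ≤ a n ∧ a n ≤ M)
    (hC1 : ∀ n, ContDiff ℝ 1 (f n))
    (hderiv : ∀ n t, |deriv (f n) t| ≤ βh n * (1 + |t|)) (hβh : InS βh)
    (k : ℕ) (R : ℝ) (hR : 0 < R) :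
    ∃ C' : ℝ, 0 < C' ∧ ∀ x : ℕ → ℝ, InS x → (∑' n : ℕ, x n ^ 2) ≤ R →
      (α / 2) * ∑' n : ℕ, x n ^ 2 * ((n : ℝ) + 1) ^ (2 * k) ≤
        (1 / (2 * α)) * ∑' n : ℕ, (a n * x n + deriv (f n) (x n)) ^ 2 *
          ((n : ℝ) + 1) ^ (2 * k) + C' :=
  stmt_8_general a βh α M f hα ha hderiv hβh k R
end

section
/- Let (c_n)_{n≥1} ∈ s. Then for each n ≥ 1 the equation (1 + 1/(n²+1))·x + (1/n!)·tanh(x) = c_n has a unique real solution x_n*, and the resulting sequence (x_n*)_{n≥1} belongs to s. -/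
open Filter

namespace Real

theorem tanh_strictMono : StrictMono tanh := by
  intro x y hxy
  rw [tanh_eq_sinh_div_cosh, tanh_eq_sinh_div_cosh, div_lt_div_iff₀ (cosh_pos x) (cosh_pos y)]
  have h : 0 < sinh (y - x) := sinh_pos_iff.2 (sub_pos.2 hxy)
  rw [sinh_sub] at h
  linarith

theorem continuous_tanh : Continuous tanh := by
  simp only [funext tanh_eq_sinh_div_cosh]
  exact continuous_sinh.div continuous_cosh fun x => (cosh_pos x).ne'

theorem tanh_nonneg {x : ℝ} (hx : 0 ≤ x) : 0 ≤ tanh x :=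
  tanh_zero ▸ tanh_strictMono.monotone hx

theorem tanh_nonpos {x : ℝ} (hx : x ≤ 0) : tanh x ≤ 0 :=
  tanh_zero ▸ tanh_strictMono.monotone hx

end Real

open Real

theorem existsUnique_mul_add_mul_tanh_eq {a b : ℝ} (ha : 0 < a) (hb : 0 ≤ b) (c : ℝ) :
    ∃! x : ℝ, a * x + b * tanh x = c := by
  set f : ℝ → ℝ := fun x => a * x + b * tanh x
  have hmono : StrictMono f := fun u v huv =>
    add_lt_add_of_lt_of_le (mul_lt_mul_of_pos_left huv ha)
      (mul_le_mul_of_nonneg_left (tanh_strictMono huv).le hb)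
  have hcont : Continuous f :=
    (continuous_const.mul continuous_id).add (continuous_const.mul continuous_tanh)
  have hlin : Tendsto (fun x : ℝ => a * x) atTop atTop := tendsto_id.const_mul_atTop ha
  have hlin' : Tendsto (fun x : ℝ => a * x) atBot atBot := tendsto_id.const_mul_atBot ha
  have htop : Tendsto f atTop atTop :=
    tendsto_atTop_add_right_of_le _ (-b) hlin fun x => by
      nlinarith [neg_one_lt_tanh x]
  have hbot : Tendsto f atBot atBot :=
    tendsto_atBot_add_right_of_ge _ b hlin' fun x => by
      nlinarith [tanh_lt_one x]
  obtain ⟨x, hx⟩ := hcont.surjective htop hbot c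
  exact ⟨x, hx, fun y hy => hmono.injective (hy.trans hx.symm)⟩

theorem abs_le_abs_mul_add_mul_tanh {a b : ℝ} (ha : 1 ≤ a) (hb : 0 ≤ b) (y : ℝ) :
    |y| ≤ |a * y + b * tanh y| := by
  rcases le_total 0 y with hy | hy
  · have := tanh_nonneg hy
    rw [abs_of_nonneg hy]
    exact le_trans (by nlinarith) (le_abs_self _)
  · have := tanh_nonpos hy
    rw [abs_of_nonpos hy]
    exact le_trans (by nlinarith) (neg_le_abs _)

theorem InS.of_abs_le_s16 {x y : ℕ → ℝ} (hy : InS y) (h : ∀ n, |x n| ≤ |y n|) : InS x := by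
  intro k
  obtain ⟨C, hC⟩ := hy k
  exact ⟨C, fun n => (mul_le_mul_of_nonneg_right (h n) (by positivity)).trans (hC n)⟩

/-- for `(c_n) ∈ s`, for each `n ≥ 1` the equation
`(1 + 1/(n² + 1)) x + (1/n!) tanh x = c_n` has a unique real solution `x_n*`, and the
sequence `(x_n*)` belongs to `s`. (Here index `n : ℕ` stands for the paper's `n + 1`.) -/
theorem stmt_16 (c : ℕ → ℝ) (hc : InS c) :
    ∃ x : ℕ → ℝ, InS x ∧ ∀ n : ℕ,
      ((1 + 1 / (((n : ℝ) + 1) ^ 2 + 1)) * x n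
          + (1 / (Nat.factorial (n + 1) : ℝ)) * Real.tanh (x n) = c n) ∧
      (∀ y : ℝ, (1 + 1 / (((n : ℝ) + 1) ^ 2 + 1)) * y
          + (1 / (Nat.factorial (n + 1) : ℝ)) * Real.tanh y = c n → y = x n) := by
  have ha (n : ℕ) : 1 ≤ 1 + 1 / (((n : ℝ) + 1) ^ 2 + 1) := le_add_of_nonneg_right (by positivity)
  have hb (n : ℕ) : 0 ≤ 1 / (Nat.factorial (n + 1) : ℝ) := by positivity
  have hsol (n : ℕ) := existsUnique_mul_add_mul_tanh_eq (one_pos.trans_le (ha n)) (hb n) (c n)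
  choose x hx using fun n => (hsol n).exists
  refine ⟨x, hc.of_abs_le_s16 fun n => ?_, fun n => ⟨hx n, fun y hy => (hsol n).unique hy (hx n)⟩⟩
  exact (abs_le_abs_mul_add_mul_tanh (ha n) (hb n) (x n)).trans_eq (by rw [hx n])
end

section
/- Let (a_n)_{n≥1} be reals with 0 < α ≤ a_n ≤ M, let (ν_n)_{n≥1} ∈ s with ν_n > 0 for all n, and let (c_n)_{n≥1} ∈ s be such that there is a constant M_max < π/2 with |c_n/ν_n| ≤ M_max for all n. Then for each n ≥ 1 the equation a_n·x + ν_n·arctan(x) = c_n has a unique real solution x_n*, and the resulting sequence (x_n*)_{n≥1} belongs to s. -/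
/-- with `0 < α ≤ a_n ≤ M`, `(ν_n) ∈ s` positive, `(c_n) ∈ s`, and
`|c_n/ν_n| ≤ M_max < π/2` for all `n`, for each `n` the equation
`a_n x + ν_n arctan x = c_n` has a unique real solution `x_n*`, and the sequence
`(x_n*)` belongs to `s`. -/
theorem stmt_18 (a ν c : ℕ → ℝ) (α M Mmax : ℝ)
    (hα : 0 < α) (ha : ∀ n, α ≤ a n ∧ a n ≤ M)
    (hν : InS ν) (hνpos : ∀ n, 0 < ν n) (hc : InS c)
    (hMmax : Mmax < Real.pi / 2) (hratio : ∀ n, |c n / ν n| ≤ Mmax) :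
    ∃ x : ℕ → ℝ, InS x ∧ ∀ n : ℕ,
      (a n * x n + ν n * Real.arctan (x n) = c n) ∧
      (∀ y : ℝ, a n * y + ν n * Real.arctan y = c n → y = x n) := by
  have hg : ∀ n : ℕ, ∃! x : ℝ, a n * x + ν n * Real.arctan x = c n := by
    intro n
    obtain ⟨haα, haM⟩ := ha n
    have ha0 : 0 < a n := lt_of_lt_of_le hα haα
    have hν0 := hνpos n
    set g : ℝ → ℝ := fun x => a n * x + ν n * Real.arctan x with hgdef
    have hmono : StrictMono g := by
      have h1 : StrictMono fun x : ℝ => a n * x := fun u v huv => by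
        dsimp only; nlinarith
      have h2 : Monotone fun x : ℝ => ν n * Real.arctan x := fun u v huv => by
        dsimp only
        exact mul_le_mul_of_nonneg_left (Real.arctan_strictMono.monotone huv) hν0.le
      exact h1.add_monotone h2
    have hcont : Continuous g := by
      apply Continuous.add (continuous_const.mul continuous_id)
      exact continuous_const.mul Real.continuous_arctan
    obtain ⟨t, hat⟩ : ∃ t : ℝ, a n * t = |c n| + ν n * (Real.pi / 2) + a n :=
      ⟨(|c n| + ν n * (Real.pi / 2) + a n) / a n, by field_simp⟩
    have hπ := Real.pi_pos
    have ht0 : 0 < t := by nlinarith [abs_nonneg (c n)]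
    have hneg : -t ≤ t := by linarith
    have h1 : g (-t) ≤ c n := by
      have harc := Real.arctan_lt_pi_div_two (-t)
      have h3 := mul_lt_mul_of_pos_left harc hν0
      have := neg_abs_le (c n)
      simp only [hgdef]
      nlinarith
    have h2 : c n ≤ g t := by
      have harc := Real.neg_pi_div_two_lt_arctan t
      have h3 := mul_lt_mul_of_pos_left harc hν0
      have := le_abs_self (c n)
      simp only [hgdef]
      nlinarith
    obtain ⟨x, _, hx⟩ := intermediate_value_Icc hneg hcont.continuousOn ⟨h1, h2⟩
    exact ⟨x, hx, fun y hy => hmono.injective (hy.trans hx.symm)⟩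
  choose x hx hun using hg
  refine ⟨x, ?_, fun n => ⟨hx n, hun n⟩⟩
  intro k
  obtain ⟨C, hC⟩ := hc k
  refine ⟨C / α, fun n => ?_⟩
  obtain ⟨haα, _⟩ := ha n
  have hν0 := hνpos n
  have heq := hx n
  have hxb : α * |x n| ≤ |c n| := by
    rcases le_or_gt 0 (x n) with h | h
    · have harc : 0 ≤ Real.arctan (x n) := by
        rw [← Real.arctan_zero]; exact Real.arctan_strictMono.monotone h
      have h1 := le_abs_self (c n)
      rw [abs_of_nonneg h]
      nlinarith
    · have harc : Real.arctan (x n) ≤ 0 := by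
        have := Real.arctan_strictMono.monotone h.le
        simpa using this
      have h1 := neg_abs_le (c n)
      rw [abs_of_neg h]
      nlinarith
  have hp : (0:ℝ) ≤ ((n:ℝ)+1)^k := by positivity
  calc |x n| * ((n:ℝ)+1)^k ≤ (|c n| / α) * ((n:ℝ)+1)^k := by
        apply mul_le_mul_of_nonneg_right _ hp
        rw [le_div_iff₀ hα]; nlinarith
    _ = (|c n| * ((n:ℝ)+1)^k) / α := by ring
    _ ≤ C / α := by gcongr; exact hC n
end
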